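/- For every natural number n ≥ 2, with S = {0, 1, 2, …, n}, one has z_S ≤ (3/4)·log₂(n), where log₂ denotes the base-2 logarithm. -/

import Mathlib

open Real Finset

/-- `g_S(t) = ∑_{e ∈ S} t^(2e)`. -/
noncomputable def gS (S : Finset ℕ) (t : ℝ) : ℝ := ∑ e ∈ S, t ^ (2 * e)

/-- `h_S(t) = ∑_{e ∈ S} e² t^(2e-2)` (the term for `e = 0` being `0`). -/
noncomputable def hS (S : Finset ℕ) (t : ℝ) : ℝ := ∑ e ∈ S, (e : ℝ) ^ 2 * t ^ (2 * e - 2)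

/-- `q_S(t) = ∑_{e ∈ S} e t^(2e-1)` (the term for `e = 0` being `0`). -/
noncomputable def qS (S : Finset ℕ) (t : ℝ) : ℝ := ∑ e ∈ S, (e : ℝ) * t ^ (2 * e - 1)

/-- `E_S(t) = g_S(t) h_S(t) - q_S(t)²`. -/
noncomputable def ES (S : Finset ℕ) (t : ℝ) : ℝ := gS S t * hS S t - qS S t ^ 2

/-- The expected number of real zeros in `(0,1)`, given by the Edelman–Kostlan integral. -/
noncomputable def zS (S : Finset ℕ) : ℝ :=
  (1 / Real.pi) * ∫ t in (0 : ℝ)..1, Real.sqrt (ES S t) / gS S t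

/-! For `S = {0, …, n}` and `u = t²` the sums `g`, `h`, `q` are a geometric sum and its first two
derivatives, which gives the closed form `(1 - u)⁴ E = (1 - u^(n+1))² - (n+1)² uⁿ (1 - u)²`.
Hence the Edelman–Kostlan density `√E / g` is at most `1 / (1 - t²)`; it is also at most `n`,
because `h ≤ n² g` termwise after a shift of index. Integrating the first bound over
`[0, 1 - 1/n]` and the second over `[1 - 1/n, 1]` gives `z_S ≤ (log n + 1) / π`, which is below
`(3/4) log₂ n` as soon as `n ≥ 2`. -/

section GeomSum

variable {R : Type*} [CommRing R]

lemma one_sub_sq_mul_sum_range_mul_pow_pred (u : R) (n : ℕ) :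
    (1 - u) ^ 2 * ∑ e ∈ range (n + 1), (e : R) * u ^ (e - 1)
      = 1 - (n + 1) * u ^ n + n * u ^ (n + 1) := by
  induction n with
  | zero => simp
  | succ m ih =>
    rw [sum_range_succ, Nat.add_sub_cancel]
    push_cast
    linear_combination ih

lemma one_sub_pow_three_mul_sum_range_sq_mul_pow_pred (u : R) (n : ℕ) :
    (1 - u) ^ 3 * ∑ e ∈ range (n + 1), (e : R) ^ 2 * u ^ (e - 1)
      = 1 + u - (n + 1) ^ 2 * u ^ n + (2 * n ^ 2 + 2 * n - 1) * u ^ (n + 1)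
          - n ^ 2 * u ^ (n + 2) := by
  induction n with
  | zero => simp
  | succ m ih =>
    rw [sum_range_succ, Nat.add_sub_cancel]
    push_cast
    linear_combination ih

end GeomSum

section General

variable (S : Finset ℕ)

lemma continuous_gS : Continuous (gS S) := by
  unfold gS; fun_prop

lemma continuous_ES : Continuous (ES S) := by
  unfold ES gS hS qS; fun_prop

variable {S}

lemma one_le_gS (h0 : 0 ∈ S) (t : ℝ) : 1 ≤ gS S t := by
  have := single_le_sum (f := fun e => t ^ (2 * e)) (fun e _ => (even_two_mul e).pow_nonneg t) h0
  simpa [gS] using this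

lemma gS_pos (h0 : 0 ∈ S) (t : ℝ) : 0 < gS S t :=
  one_pos.trans_le (one_le_gS h0 t)

lemma continuous_sqrt_ES_div_gS (h0 : 0 ∈ S) :
    Continuous fun t => √(ES S t) / gS S t :=
  (continuous_ES S).sqrt.div (continuous_gS S) fun t => (gS_pos h0 t).ne'

lemma sqrt_ES_div_gS_le {t c : ℝ} (h0 : 0 ∈ S) (hc : 0 ≤ c)
    (h : ES S t ≤ c ^ 2 * gS S t ^ 2) : √(ES S t) / gS S t ≤ c := by
  have hg := gS_pos h0 t
  rw [div_le_iff₀ hg, Real.sqrt_le_left (by positivity)]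
  linarith

end General

section Range

variable (n : ℕ) (t : ℝ)

lemma gS_range_eq : gS (range (n + 1)) t = ∑ e ∈ range (n + 1), (t ^ 2) ^ e :=
  sum_congr rfl fun e _ => pow_mul t 2 e

lemma hS_range_eq :
    hS (range (n + 1)) t = ∑ e ∈ range (n + 1), (e : ℝ) ^ 2 * (t ^ 2) ^ (e - 1) := by
  refine sum_congr rfl fun e _ => ?_
  rcases e with _ | e
  · simp
  · rw [← pow_mul, show 2 * (e + 1) - 2 = 2 * (e + 1 - 1) by omega]

lemma qS_range_eq :
    qS (range (n + 1)) t = t * ∑ e ∈ range (n + 1), (e : ℝ) * (t ^ 2) ^ (e - 1) := by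
  rw [mul_sum]
  refine sum_congr rfl fun e _ => ?_
  rcases e with _ | e
  · simp
  · rw [← pow_mul, mul_left_comm, ← pow_succ',
      show 2 * (e + 1) - 1 = 2 * (e + 1 - 1) + 1 by omega]

lemma one_sub_pow_four_mul_ES_range :
    (1 - t ^ 2) ^ 4 * ES (range (n + 1)) t
      = (1 - (t ^ 2) ^ (n + 1)) ^ 2 - (n + 1) ^ 2 * (t ^ 2) ^ n * (1 - t ^ 2) ^ 2 := by
  have hg := mul_neg_geom_sum (t ^ 2) (n + 1)
  have hq := one_sub_sq_mul_sum_range_mul_pow_pred (t ^ 2) n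
  have hh := one_sub_pow_three_mul_sum_range_sq_mul_pow_pred (t ^ 2) n
  rw [ES, gS_range_eq, hS_range_eq, qS_range_eq]
  set u := t ^ 2
  set G := ∑ e ∈ range (n + 1), u ^ e
  set Q := ∑ e ∈ range (n + 1), (e : ℝ) * u ^ (e - 1)
  set H := ∑ e ∈ range (n + 1), (e : ℝ) ^ 2 * u ^ (e - 1)
  linear_combination ((1 - u) ^ 3 * H) * hg + (1 - u ^ (n + 1)) * hh
    - u * ((1 - u) ^ 2 * Q + (1 - (n + 1) * u ^ n + n * u ^ (n + 1))) * hq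

lemma hS_range_le : hS (range (n + 1)) t ≤ n ^ 2 * gS (range (n + 1)) t := by
  rw [hS_range_eq, gS_range_eq, sum_range_succ', sum_range_succ, mul_add, mul_sum]
  have hshift : ∀ e ∈ range n,
      ((e + 1 : ℕ) : ℝ) ^ 2 * (t ^ 2) ^ (e + 1 - 1) ≤ n ^ 2 * (t ^ 2) ^ e := by
    intro e he
    have : ((e + 1 : ℕ) : ℝ) ≤ n := by exact_mod_cast mem_range.1 he
    rw [Nat.add_sub_cancel]
    gcongr
  have : 0 ≤ (n : ℝ) ^ 2 * (t ^ 2) ^ n := by positivity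
  rw [Nat.cast_zero, zero_pow two_ne_zero, zero_mul, add_zero]
  linarith [sum_le_sum hshift]

lemma sqrt_ES_range_div_gS_le_natCast :
    √(ES (range (n + 1)) t) / gS (range (n + 1)) t ≤ n := by
  refine sqrt_ES_div_gS_le (by simp) n.cast_nonneg ?_
  have hg := gS_pos (S := range (n + 1)) (by simp) t
  have := mul_le_mul_of_nonneg_left (hS_range_le n t) hg.le
  rw [ES]
  nlinarith [sq_nonneg (qS (range (n + 1)) t)]

lemma sqrt_ES_range_div_gS_le_inv_one_sub {t : ℝ} (ht0 : 0 ≤ t) (ht1 : t < 1) :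
    √(ES (range (n + 1)) t) / gS (range (n + 1)) t ≤ (1 - t)⁻¹ := by
  have hu : 0 < 1 - t ^ 2 := by nlinarith
  have hG : 1 - (t ^ 2) ^ (n + 1) = (1 - t ^ 2) * gS (range (n + 1)) t := by
    rw [gS_range_eq, mul_neg_geom_sum]
  have hE : (1 - t ^ 2) ^ 2 * ES (range (n + 1)) t ≤ gS (range (n + 1)) t ^ 2 := by
    have hclosed := one_sub_pow_four_mul_ES_range n t
    rw [hG] at hclosed
    have : 0 ≤ (n + 1 : ℝ) ^ 2 * (t ^ 2) ^ n := by positivity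
    refine le_of_mul_le_mul_left ?_ (pow_pos hu 2)
    nlinarith
  calc √(ES (range (n + 1)) t) / gS (range (n + 1)) t ≤ (1 - t ^ 2)⁻¹ := by
        refine sqrt_ES_div_gS_le (by simp) (inv_nonneg.2 hu.le) ?_
        rw [inv_pow, ← div_eq_inv_mul, le_div_iff₀ (pow_pos hu 2)]
        linarith
    _ ≤ (1 - t)⁻¹ := inv_anti₀ (by linarith) (by nlinarith)

end Range

lemma integral_le_log_add_one {f : ℝ → ℝ} {N : ℝ} (hN : 1 ≤ N)
    (hf : IntervalIntegrable f MeasureTheory.volume 0 1)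
    (h_inv : ∀ t ∈ Set.Ico (0 : ℝ) 1, f t ≤ (1 - t)⁻¹)
    (h_const : ∀ t ∈ Set.Icc (0 : ℝ) 1, f t ≤ N) :
    ∫ t in (0 : ℝ)..1, f t ≤ log N + 1 := by
  have hN0 : 0 < N := by linarith
  have hN_inv : 0 < N⁻¹ := inv_pos.2 hN0
  have hN_inv_le : N⁻¹ ≤ 1 := inv_le_one_of_one_le₀ hN
  set a := 1 - N⁻¹
  have ha0 : 0 ≤ a := by linarith
  have ha1 : a ≤ 1 := by linarith
  have hf₁ := hf.mono_set (Set.uIcc_subset_uIcc Set.left_mem_uIcc (Set.mem_uIcc_of_le ha0 ha1))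
  have hf₂ := hf.mono_set (Set.uIcc_subset_uIcc (Set.mem_uIcc_of_le ha0 ha1) Set.right_mem_uIcc)
  have h_inv_int : ∫ t in (0 : ℝ)..a, (1 - t)⁻¹ = log N := by
    rw [intervalIntegral.integral_comp_sub_left (fun s => s⁻¹), sub_zero, sub_sub_cancel,
      integral_inv_of_pos hN_inv one_pos, div_inv_eq_mul, one_mul]
  have h₁ : ∫ t in (0 : ℝ)..a, f t ≤ log N := by
    rw [← h_inv_int]
    refine intervalIntegral.integral_mono_on ha0 hf₁ ?_
      fun t ht => h_inv t ⟨ht.1, by linarith [ht.2]⟩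
    refine (ContinuousOn.inv₀ (by fun_prop) fun t ht => ?_).intervalIntegrable
    rw [Set.uIcc_of_le ha0] at ht
    linarith [ht.2]
  have h₂ : ∫ t in a..1, f t ≤ 1 := by
    calc ∫ t in a..1, f t ≤ ∫ _ in a..1, N :=
          intervalIntegral.integral_mono_on ha1 hf₂ intervalIntegrable_const
            fun t ht => h_const t ⟨ha0.trans ht.1, ht.2⟩
      _ = 1 := by
          rw [intervalIntegral.integral_const, smul_eq_mul, sub_sub_cancel,
            inv_mul_cancel₀ hN0.ne']
  rw [← intervalIntegral.integral_add_adjacent_intervals hf₁ hf₂]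
  linarith

lemma log_add_one_div_pi_le_logb {x : ℝ} (hx : 2 ≤ x) :
    (log x + 1) / π ≤ 3 / 4 * logb 2 x := by
  have hc0 : 0 < log 2 := log_pos one_lt_two
  have hcx : log 2 ≤ log x := log_le_log two_pos hx
  have hc1 := log_two_lt_d9
  calc (log x + 1) / π ≤ (log x + 1) / 3 :=
        div_le_div_of_nonneg_left (by linarith) three_pos pi_gt_three.le
    _ ≤ 3 / 4 * (log x / log 2) := by
        field_simp
        nlinarith
    _ = 3 / 4 * logb 2 x := rfl

theorem stmt16 (n : ℕ) (hn : 2 ≤ n) :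
    zS (Finset.range (n + 1)) ≤ (3 / 4) * Real.logb 2 n := by
  have hn1 : (1 : ℝ) ≤ n := by exact_mod_cast one_le_two.trans hn
  have h_int := integral_le_log_add_one hn1
    ((continuous_sqrt_ES_div_gS (S := range (n + 1)) (by simp)).intervalIntegrable 0 1)
    (fun t ht => sqrt_ES_range_div_gS_le_inv_one_sub n ht.1 ht.2)
    (fun t _ => sqrt_ES_range_div_gS_le_natCast n t)
  calc zS (range (n + 1))
        = (∫ t in (0 : ℝ)..1, √(ES (range (n + 1)) t) / gS (range (n + 1)) t) / π := by
        rw [zS, one_div_mul_eq_div]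
    _ ≤ (log n + 1) / π := by gcongr
    _ ≤ 3 / 4 * logb 2 n := log_add_one_div_pi_le_logb (by exact_mod_cast hn)
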